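/- Under the same hypotheses (I - FX invertible, K - GX M FU invertible where M = (I - FX)⁻¹ and K = I - GU), if (I - FX) X - FU U = Fθ and -GX X + (I - GU) U = Gθ, then X = M (Fθ + FU (K - GX M FU)⁻¹ (GX M Fθ + Gθ)). -/

import Mathlib

/-!
Block Gaussian elimination: the first equation gives `X = M (Fθ + FU U)`; substituting this into
the second leaves the Schur-complement system `(K - GX M FU) U = GX M Fθ + Gθ`, which is solved
for `U` and substituted back.
-/

namespace Matrix

variable {l m p R : Type*} [Fintype l] [DecidableEq l] [Fintype m] [CommRing R]

theorem eq_nonsing_inv_mul_of_mul_eq {A : Matrix l l R} {X B : Matrix l p R} (hA : IsUnit A)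
    (h : A * X = B) : X = A⁻¹ * B := by
  rw [← h, nonsing_inv_mul_cancel_left A X ((isUnit_iff_isUnit_det A).mp hA)]

theorem schur_mul_eq_of_eq_nonsing_inv_mul {A : Matrix l l R} {B : Matrix l m R}
    {C : Matrix m l R} {D : Matrix m m R} {X F : Matrix l p R} {U G : Matrix m p R}
    (hX : X = A⁻¹ * (F + B * U)) (h : -(C * X) + D * U = G) :
    (D - C * A⁻¹ * B) * U = C * A⁻¹ * F + G := by
  subst hX
  linear_combination
    (norm := (simp only [Matrix.mul_add, Matrix.sub_mul, Matrix.mul_assoc]; abel)) h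

theorem fst_eq_of_block_system [DecidableEq m] {A : Matrix l l R} {B : Matrix l m R}
    {C : Matrix m l R} {D : Matrix m m R} {X F : Matrix l p R} {U G : Matrix m p R}
    (hA : IsUnit A) (hS : IsUnit (D - C * A⁻¹ * B))
    (h₁ : A * X - B * U = F) (h₂ : -(C * X) + D * U = G) :
    X = A⁻¹ * (F + B * (D - C * A⁻¹ * B)⁻¹ * (C * A⁻¹ * F + G)) := by
  have hX : X = A⁻¹ * (F + B * U) := eq_nonsing_inv_mul_of_mul_eq hA (eq_add_of_sub_eq h₁)
  have hU : U = (D - C * A⁻¹ * B)⁻¹ * (C * A⁻¹ * F + G) :=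
    eq_nonsing_inv_mul_of_mul_eq hS (schur_mul_eq_of_eq_nonsing_inv_mul hX h₂)
  rw [hX, hU, Matrix.mul_assoc B]

end Matrix

theorem stmt_1 {n m p : ℕ}
    (FX : Matrix (Fin n) (Fin n) ℝ) (FU : Matrix (Fin n) (Fin m) ℝ)
    (GX : Matrix (Fin m) (Fin n) ℝ) (GU : Matrix (Fin m) (Fin m) ℝ)
    (X Fθ : Matrix (Fin n) (Fin p) ℝ) (U Gθ : Matrix (Fin m) (Fin p) ℝ)
    (M : Matrix (Fin n) (Fin n) ℝ) (K : Matrix (Fin m) (Fin m) ℝ)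
    (hMdef : M = (1 - FX)⁻¹) (hKdef : K = 1 - GU)
    (hM : IsUnit (1 - FX))
    (hS : IsUnit (K - GX * M * FU))
    (h1 : (1 - FX) * X - FU * U = Fθ)
    (h2 : -(GX * X) + (1 - GU) * U = Gθ) :
    X = M * (Fθ + FU * (K - GX * M * FU)⁻¹ * (GX * M * Fθ + Gθ)) := by
  subst hMdef hKdef
  exact Matrix.fst_eq_of_block_system hM hS h1 h2
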